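/- Let d be an odd positive integer, a, b positive integers with a + b = d and a ≡ ((d+1)/2)² (mod 4). Set λ₀ = √a + i√b and τ₀ = (λ₀² − d²)/(4d²). Then λ̄₀·θ₍₀₎(0, −τ̄₀) = λ₀·θ₍₀₎(0, τ₀) (equivalently, λ₀·θ₍₀₎(0, τ₀) is real), and (−1)^{(d²−1)/8}·λ̄₀·θ₍₁₎(0, −τ̄₀) = λ₀·θ₍₁₎(0, τ₀). -/

import Mathlib

/-- Theta with characteristic `θ₍₀₎(z, τ) = ∑_{m even} exp(iπ(τ/2)m²) exp(2iπmz)`. -/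
noncomputable def theta0 (z τ : ℂ) : ℂ :=
  ∑' m : ℤ, if Even m then
    Complex.exp ((Real.pi : ℂ) * Complex.I * (τ / 2) * (m : ℂ) ^ 2) *
      Complex.exp (2 * (Real.pi : ℂ) * Complex.I * (m : ℂ) * z)
  else 0

/-- Theta with characteristic `θ₍₁₎(z, τ) = ∑_{m odd} exp(iπ(τ/2)m²) exp(2iπmz)`. -/
noncomputable def theta1 (z τ : ℂ) : ℂ :=
  ∑' m : ℤ, if Odd m then
    Complex.exp ((Real.pi : ℂ) * Complex.I * (τ / 2) * (m : ℂ) ^ 2) *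
      Complex.exp (2 * (Real.pi : ℂ) * Complex.I * (m : ℂ) * z)
  else 0

/-!
Put `η = (1 - λ̄₀²) / 2`. Because `λ₀ λ̄₀ = d`, the point `2τ₀` equals `η / λ̄₀² = η / (1 - 2η)`,
the image of `η` under `S T² S`. The null values `ϑ₃(τ) = ∑ exp(πiτn²)` and
`θ₂(τ) = ∑ exp(πiτ(n + 1/2)²)` both pick up the factor `√(1 - 2η) = λ̄₀` under this map (`S` fixes
`ϑ₃` and exchanges `θ₂` with the `2`-periodic `θ₄`), and `θ₍₀₎(0, τ) = ϑ₃(2τ)`,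
`θ₍₁₎(0, τ) = θ₂(2τ)`; hence `λ₀ θ(2τ₀) = d θ(η)`. As both series have real coefficients,
`θ(-τ̄) = conj θ(τ)`, so it remains to compare `θ(η)` with `θ(-η̄) = θ(η + 2K)`, where
`K = a - (d + 1)/2 = -Re η` is an integer: `ϑ₃` has period `2`, while `θ₂(τ + 2K) = i^K θ₂(τ)`
and the congruence on `a` makes `i^K = (-1)^{(d²-1)/8}`.
-/

open Complex Real ComplexConjugate

section Reindex

variable {M : Type*} [AddCommMonoid M] [TopologicalSpace M]

theorem tsum_ite_even (f : ℤ → M) :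
    ∑' m, (if Even m then f m else 0) = ∑' n, f (2 * n) := by
  rw [← (mul_right_injective₀ two_ne_zero).tsum_eq]
  · exact tsum_congr fun n ↦ if_pos (even_two_mul n)
  · intro m hm
    obtain ⟨n, rfl⟩ := (Function.mem_support.1 hm).imp_symm fun h ↦ if_neg h
    exact ⟨n, by ring⟩

theorem tsum_ite_odd (f : ℤ → M) :
    ∑' m, (if Odd m then f m else 0) = ∑' n, f (2 * n + 1) := by
  rw [← (add_left_injective 1 |>.comp (mul_right_injective₀ two_ne_zero)).tsum_eq]
  · exact tsum_congr fun n ↦ if_pos (odd_two_mul_add_one n)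
  · intro m hm
    obtain ⟨n, rfl⟩ := (Function.mem_support.1 hm).imp_symm fun h ↦ if_neg h
    exact ⟨n, rfl⟩

end Reindex

theorem mul_cpow_of_re_pos {u v : ℂ} (hu : 0 < u.re) (hv : 0 < v.re) (s : ℂ) :
    (u * v) ^ s = u ^ s * v ^ s := by
  have hu0 : u ≠ 0 := fun h ↦ by simp [h] at hu
  have hv0 : v ≠ 0 := fun h ↦ by simp [h] at hv
  have hu' := abs_lt.1 (abs_arg_lt_pi_div_two_iff.2 (.inl hu))
  have hv' := abs_lt.1 (abs_arg_lt_pi_div_two_iff.2 (.inl hv))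
  rw [cpow_def_of_ne_zero (mul_ne_zero hu0 hv0), cpow_def_of_ne_zero hu0,
    cpow_def_of_ne_zero hv0, log_mul hu0 hv0 ⟨by linarith, by linarith⟩, add_mul, Complex.exp_add]

theorem cpow_half_mul_cpow_half_eq {u v Q : ℂ} (hu : 0 < u.re) (hv : 0 < v.re) (hQ : 0 < Q.re)
    (huv : u * v = Q ^ 2) : u ^ (1 / 2 : ℂ) * v ^ (1 / 2 : ℂ) = Q := by
  rw [← mul_cpow_of_re_pos hu hv, huv, one_div, sq_cpow_two_inv hQ]

-- Jacobi's `θ₂(τ) = ∑ₙ exp(πiτ(n + 1/2)²)`.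
noncomputable def jacobiThetaTwo (τ : ℂ) : ℂ :=
  cexp (π * I * τ / 4) * jacobiTheta₂ (τ / 2) τ

theorem theta0_zero_eq_jacobiTheta₂ (τ : ℂ) : theta0 0 τ = jacobiTheta₂ 0 (2 * τ) := by
  rw [theta0, tsum_ite_even, jacobiTheta₂]
  refine tsum_congr fun n ↦ ?_
  rw [jacobiTheta₂_term, ← Complex.exp_add]
  push_cast
  ring_nf

theorem theta1_zero_eq_jacobiThetaTwo (τ : ℂ) : theta1 0 τ = jacobiThetaTwo (2 * τ) := by
  rw [theta1, tsum_ite_odd, jacobiThetaTwo, jacobiTheta₂, ← tsum_mul_left]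
  refine tsum_congr fun n ↦ ?_
  rw [jacobiTheta₂_term, ← Complex.exp_add, ← Complex.exp_add]
  push_cast
  ring_nf

theorem jacobiTheta₂_zero_neg_inv {τ : ℂ} (hτ : τ ≠ 0) :
    jacobiTheta₂ 0 (-1 / τ) = (-I * τ) ^ (1 / 2 : ℂ) * jacobiTheta₂ 0 τ := by
  have h : (-I * τ) ^ (1 / 2 : ℂ) ≠ 0 := by simp [cpow_eq_zero_iff, hτ]
  rw [jacobiTheta₂_functional_equation 0 τ]
  field_simp
  simp

theorem jacobiTheta₂_half_neg_inv {τ : ℂ} (hτ : τ ≠ 0) :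
    jacobiTheta₂ (1 / 2) (-1 / τ) = (-I * τ) ^ (1 / 2 : ℂ) * jacobiThetaTwo τ := by
  have h : (-I * τ) ^ (1 / 2 : ℂ) ≠ 0 := by simp [cpow_eq_zero_iff, hτ]
  have hz : τ / 2 / τ = 1 / 2 := by field_simp
  have hexp : -π * I * (τ / 2) ^ 2 / τ = -(π * I * τ / 4) := by field_simp; ring
  rw [jacobiThetaTwo, jacobiTheta₂_functional_equation (τ / 2) τ, hz, hexp, Complex.exp_neg]
  field_simp [Complex.exp_ne_zero]

theorem jacobiThetaTwo_neg_inv {τ : ℂ} (hτ : 0 < τ.im) :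
    jacobiThetaTwo (-1 / τ) = (-I * τ) ^ (1 / 2 : ℂ) * jacobiTheta₂ (1 / 2) τ := by
  have hτ0 : τ ≠ 0 := fun h ↦ by simp [h] at hτ
  have hre : 0 < (-I * τ).re := by simpa using hτ
  have hsqrt : (-I * τ) ^ (1 / 2 : ℂ) ≠ 0 := by simp [cpow_eq_zero_iff, hτ0]
  have h := jacobiTheta₂_half_neg_inv (τ := -1 / τ) (by simpa using hτ0)
  rw [show -1 / (-1 / τ) = τ by field_simp, show -I * (-1 / τ) = (-I * τ)⁻¹ by field_simp; simp,
    inv_cpow _ _ (slitPlane_arg_ne_pi (.inl hre))] at h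
  rw [h]
  field_simp

theorem neg_one_div_im_pos {η : ℂ} (hη : 0 < η.im) : 0 < (-1 / η).im := by
  rw [neg_div, neg_im, one_div, inv_im, neg_div, neg_neg]
  exact div_pos hη (normSq_pos.2 fun h ↦ by simp [h] at hη)

theorem apply_div_sq_of_neg_inv {f g : ℂ → ℂ}
    (hfg : ∀ τ, 0 < τ.im → f (-1 / τ) = (-I * τ) ^ (1 / 2 : ℂ) * g τ)
    (hgf : ∀ τ, 0 < τ.im → g (-1 / τ) = (-I * τ) ^ (1 / 2 : ℂ) * f τ)
    (hf : Function.Periodic f 2) (k : ℤ) {η Q : ℂ} (hη : 0 < η.im)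
    (hQ : Q ^ 2 = 1 + 2 * k * η) (hQre : 0 < Q.re) :
    g (η / Q ^ 2) = Q * g η := by
  have hη0 : η ≠ 0 := fun h ↦ by simp [h] at hη
  have hQ0 : Q ≠ 0 := fun h ↦ by simp [h] at hQre
  -- `η ↦ η / (1 + 2kη)` is `S T^{-2k} S`: `η / Q² = S τ₁` with `τ₁ = -1/η - 2k`.
  set τ₁ := -Q ^ 2 / η
  have hτ₁ : τ₁ = -1 / η + (-k : ℤ) * 2 := by simp only [τ₁, hQ]; push_cast; field_simp; ring
  have hτ₁im : 0 < τ₁.im := by simpa [hτ₁] using neg_one_div_im_pos hη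
  have hsqrt : (-I * τ₁) ^ (1 / 2 : ℂ) * (-I * η) ^ (1 / 2 : ℂ) = Q :=
    cpow_half_mul_cpow_half_eq (by simpa using hτ₁im) (by simpa using hη) hQre
      (by simp only [τ₁]; field_simp; simp)
  calc g (η / Q ^ 2) = g (-1 / τ₁) := by simp only [τ₁]; field_simp
    _ = (-I * τ₁) ^ (1 / 2 : ℂ) * f (-1 / η) := by rw [hgf τ₁ hτ₁im, hτ₁, hf.int_mul]
    _ = Q * g η := by rw [hfg η hη, ← mul_assoc, hsqrt]

theorem jacobiThetaTwo_add_int_mul_two (τ : ℂ) (k : ℤ) :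
    jacobiThetaTwo (τ + k * 2) = I ^ k * jacobiThetaTwo τ := by
  have hτ : Function.Periodic (jacobiTheta₂ (τ / 2 + k)) 2 := jacobiTheta₂_add_right _
  have hz : jacobiTheta₂ (τ / 2 + k) τ = jacobiTheta₂ (τ / 2) τ := by
    simpa using
      Function.Periodic.int_mul (f := (jacobiTheta₂ · τ)) (jacobiTheta₂_add_left · τ) k (τ / 2)
  have hI : I ^ k = cexp (k * (π / 2 * I)) := by rw [exp_int_mul, exp_pi_div_two_mul_I]
  have hexp : cexp (π * I * (τ + k * 2) / 4) = I ^ k * cexp (π * I * τ / 4) := by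
    rw [hI, ← Complex.exp_add]
    ring_nf
  rw [jacobiThetaTwo, jacobiThetaTwo, hexp, add_div, mul_div_cancel_right₀ _ two_ne_zero,
    hτ.int_mul, hz, mul_assoc]

theorem neg_one_pow_mul_I_zpow {j : ℕ} {k : ℤ} (h : 4 ∣ 2 * j + k) : (-1 : ℂ) ^ j * I ^ k = 1 := by
  obtain ⟨m, hm⟩ := h
  rw [← I_sq, ← pow_mul, ← zpow_natCast, ← zpow_add₀ I_ne_zero, Nat.cast_mul, Nat.cast_ofNat, hm,
    zpow_mul]
  norm_num

theorem jacobiTheta₂_zero_div_sq (k : ℤ) {η Q : ℂ} (hη : 0 < η.im)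
    (hQ : Q ^ 2 = 1 + 2 * k * η) (hQre : 0 < Q.re) :
    jacobiTheta₂ 0 (η / Q ^ 2) = Q * jacobiTheta₂ 0 η :=
  have hS τ (hτ : 0 < τ.im) := jacobiTheta₂_zero_neg_inv (τ := τ) fun h ↦ by simp [h] at hτ
  apply_div_sq_of_neg_inv hS hS (jacobiTheta₂_add_right 0) k hη hQ hQre

theorem jacobiThetaTwo_div_sq (k : ℤ) {η Q : ℂ} (hη : 0 < η.im)
    (hQ : Q ^ 2 = 1 + 2 * k * η) (hQre : 0 < Q.re) :
    jacobiThetaTwo (η / Q ^ 2) = Q * jacobiThetaTwo η :=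
  apply_div_sq_of_neg_inv (fun τ hτ ↦ jacobiTheta₂_half_neg_inv fun h ↦ by simp [h] at hτ)
    (fun _ ↦ jacobiThetaTwo_neg_inv) (jacobiTheta₂_add_right _) k hη hQ hQre

theorem two_mul_div_eq_of_mul_conj {l d : ℂ} (hl : l ≠ 0) (hd : l * conj l = d) :
    2 * ((l ^ 2 - d ^ 2) / (4 * d ^ 2)) = (1 - conj l ^ 2) / 2 / conj l ^ 2 := by
  have hl' : conj l ≠ 0 := (map_ne_zero _).2 hl
  rw [← hd]
  field_simp
  ring

theorem re_one_sub_conj_sq_div_two (l : ℂ) :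
    ((1 - conj l ^ 2) / 2).re = (1 - l.re ^ 2 + l.im ^ 2) / 2 := by
  simp [sq]; ring

theorem im_one_sub_conj_sq_div_two (l : ℂ) : ((1 - conj l ^ 2) / 2).im = l.re * l.im := by
  simp [sq]; ring

theorem neg_conj_eq_add_int_mul_two {η : ℂ} {k : ℤ} (h : η.re = -k) :
    -conj η = η + k * 2 := by
  apply Complex.ext <;> simp [h]
  ring

theorem mul_theta0_zero_eq {l d : ℂ} (hre : 0 < l.re) (him : 0 < l.im) (hd : l * conj l = d) :
    l * theta0 0 ((l ^ 2 - d ^ 2) / (4 * d ^ 2)) = d * jacobiTheta₂ 0 ((1 - conj l ^ 2) / 2) := by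
  rw [theta0_zero_eq_jacobiTheta₂, two_mul_div_eq_of_mul_conj (fun h ↦ by simp [h] at hre) hd,
    jacobiTheta₂_zero_div_sq (-1) (im_one_sub_conj_sq_div_two l ▸ mul_pos hre him)
      (by push_cast; ring) (by simpa using hre), ← mul_assoc, hd]

theorem mul_theta1_zero_eq {l d : ℂ} (hre : 0 < l.re) (him : 0 < l.im) (hd : l * conj l = d) :
    l * theta1 0 ((l ^ 2 - d ^ 2) / (4 * d ^ 2)) = d * jacobiThetaTwo ((1 - conj l ^ 2) / 2) := by
  rw [theta1_zero_eq_jacobiThetaTwo, two_mul_div_eq_of_mul_conj (fun h ↦ by simp [h] at hre) hd,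
    jacobiThetaTwo_div_sq (-1) (im_one_sub_conj_sq_div_two l ▸ mul_pos hre him)
      (by push_cast; ring) (by simpa using hre), ← mul_assoc, hd]

theorem jacobiThetaTwo_neg_conj (τ : ℂ) : jacobiThetaTwo (-conj τ) = conj (jacobiThetaTwo τ) := by
  rw [jacobiThetaTwo, jacobiThetaTwo, map_mul, jacobiTheta₂_conj, ← exp_conj,
    ← jacobiTheta₂_neg_left]
  simp only [map_div₀, map_mul, conj_ofReal, conj_I, map_ofNat]
  ring_nf

theorem theta0_zero_neg_conj (τ : ℂ) : theta0 0 (-conj τ) = conj (theta0 0 τ) := by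
  rw [theta0_zero_eq_jacobiTheta₂, theta0_zero_eq_jacobiTheta₂, jacobiTheta₂_conj, map_zero,
    map_mul, map_ofNat, mul_neg]

theorem theta1_zero_neg_conj (τ : ℂ) : theta1 0 (-conj τ) = conj (theta1 0 τ) := by
  rw [theta1_zero_eq_jacobiThetaTwo, theta1_zero_eq_jacobiThetaTwo, ← jacobiThetaTwo_neg_conj,
    map_mul, map_ofNat, mul_neg]

theorem four_dvd_of_modEq_succ_sq {a c : ℕ} (h : a ≡ (c + 1) ^ 2 [MOD 4]) :
    (4 : ℤ) ∣ 2 * (((2 * c + 1) ^ 2 - 1) / 8 : ℕ) + (a - c - 1) := by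
  obtain ⟨j, hj⟩ := Nat.even_mul_succ_self c
  have hsq : (2 * c + 1) ^ 2 = 8 * j + 1 := by
    rw [show (2 * c + 1) ^ 2 = 4 * (c * (c + 1)) + 1 by ring, hj]; ring
  obtain ⟨q, hq⟩ := Nat.modEq_iff_dvd.1 h
  rw [hsq, show (8 * j + 1 - 1) / 8 = j by omega]
  have hjZ : (c : ℤ) * (c + 1) = j + j := by exact_mod_cast hj
  push_cast at hq ⊢
  exact ⟨j - q, by linear_combination hjZ - hq⟩

theorem theta_char_at_zero_reality_general (d a b : ℕ) (hd : Odd d)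
    (ha : 0 < a) (hb : 0 < b) (hab : a + b = d)
    (hmod : a ≡ ((d + 1) / 2) ^ 2 [MOD 4])
    (l0 t0 : ℂ)
    (hl0 : l0 = (Real.sqrt a : ℂ) + Complex.I * Real.sqrt b)
    (ht0 : t0 = (l0 ^ 2 - (d : ℂ) ^ 2) / (4 * (d : ℂ) ^ 2)) :
    ((starRingEnd ℂ) l0 * theta0 0 (-(starRingEnd ℂ) t0) = l0 * theta0 0 t0) ∧
    ((-1 : ℂ) ^ ((d ^ 2 - 1) / 8) * (starRingEnd ℂ) l0 * theta1 0 (-(starRingEnd ℂ) t0) =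
      l0 * theta1 0 t0) := by
  obtain ⟨c, rfl⟩ := hd
  have hre : l0.re = √a := by simp [hl0]
  have him : l0.im = √b := by simp [hl0]
  have hnorm : l0 * conj l0 = ((2 * c + 1 : ℕ) : ℂ) := by
    rw [mul_conj, normSq_apply, hre, him, ← hab]
    push_cast [Real.mul_self_sqrt, a.cast_nonneg, b.cast_nonneg]
    norm_cast
  set η := (1 - conj l0 ^ 2) / 2
  have hη : -conj η = η + ((a - c - 1 : ℤ) : ℂ) * 2 := by
    refine neg_conj_eq_add_int_mul_two ?_
    have habR : (a : ℝ) + b = 2 * c + 1 := by exact_mod_cast hab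
    rw [re_one_sub_conj_sq_div_two, hre, him, Real.sq_sqrt a.cast_nonneg,
      Real.sq_sqrt b.cast_nonneg]
    push_cast
    linarith
  have hsign : (-1 : ℂ) ^ (((2 * c + 1) ^ 2 - 1) / 8) * I ^ (a - c - 1 : ℤ) = 1 :=
    neg_one_pow_mul_I_zpow <| four_dvd_of_modEq_succ_sq <| by
      rwa [show (2 * c + 1 + 1) / 2 = c + 1 by omega] at hmod
  have hpos : 0 < l0.re ∧ 0 < l0.im := by simp [hre, him, ha, hb]
  subst ht0
  constructor
  · rw [theta0_zero_neg_conj, ← map_mul, mul_theta0_zero_eq hpos.1 hpos.2 hnorm, map_mul,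
      map_natCast, jacobiTheta₂_conj, map_zero, hη,
      Function.Periodic.int_mul (jacobiTheta₂_add_right 0)]
  · rw [mul_assoc, theta1_zero_neg_conj, ← map_mul, mul_theta1_zero_eq hpos.1 hpos.2 hnorm,
      map_mul, map_natCast, ← jacobiThetaTwo_neg_conj, hη, jacobiThetaTwo_add_int_mul_two]
    linear_combination (((2 * c + 1 : ℕ) : ℂ) * jacobiThetaTwo η) * hsign

/-- Lemma 3.7: `λ̄₀θ₍₀₎(0, −τ̄₀) = λ₀θ₍₀₎(0, τ₀)` and
`(−1)^{(d²−1)/8} λ̄₀θ₍₁₎(0, −τ̄₀) = λ₀θ₍₁₎(0, τ₀)`. -/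
theorem theta_char_at_zero_reality (d a b : ℕ) (hd : Odd d) (hd0 : 0 < d)
    (ha : 0 < a) (hb : 0 < b) (hab : a + b = d)
    (hmod : a ≡ ((d + 1) / 2) ^ 2 [MOD 4])
    (l0 t0 : ℂ)
    (hl0 : l0 = (Real.sqrt a : ℂ) + Complex.I * Real.sqrt b)
    (ht0 : t0 = (l0 ^ 2 - (d : ℂ) ^ 2) / (4 * (d : ℂ) ^ 2)) :
    ((starRingEnd ℂ) l0 * theta0 0 (-(starRingEnd ℂ) t0) = l0 * theta0 0 t0) ∧
    ((-1 : ℂ) ^ ((d ^ 2 - 1) / 8) * (starRingEnd ℂ) l0 * theta1 0 (-(starRingEnd ℂ) t0) =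
      l0 * theta1 0 t0) :=
  theta_char_at_zero_reality_general d a b hd ha hb hab hmod l0 t0 hl0 ht0
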